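/- The Martin kernel of the BST chain with reference state {∅} satisfies, for rooted binary trees s ⊆ t, K(s,t) = C(#t, #s)⁻¹ · ∏_{u ∈ s} #t(u), and K(s,t) = 0 if s ⊄ t. -/

import Mathlib

open Finset

/-- A finite rooted binary tree: a nonempty, prefix-closed finite set of words over
`{0,1}` (encoded as `List Bool`), containing the root `[]`. -/
def IsBinTree (t : Finset (List Bool)) : Prop :=
  ([] : List Bool) ∈ t ∧ ∀ v ∈ t, ∀ u : List Bool, u <+: v → u ∈ t

/-- `subtreeCard t u = #t(u)`, the number of vertices `v ∈ t` with `u ≤ v`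
(`u` a prefix of `v`). -/
def subtreeCard (t : Finset (List Bool)) (u : List Bool) : ℕ :=
  (t.filter (fun v => u <+: v)).card

/-- The external vertices of a finite rooted binary tree `s`: words not in `s` whose
parent belongs to `s`. -/
def extVerts (s : Finset (List Bool)) : Finset (List Bool) :=
  (s.image (fun u => u ++ [true]) ∪ s.image (fun u => u ++ [false])) \ s

/-!
The hitting probabilities are pinned down by the recursion `hrec` and the boundary values,
so it suffices to exhibit the closed form `C(#t,#s)⁻¹ ∏_{v ∈ t ∖ s} #t(v)⁻¹` and check that it
satisfies the recursion. The check rests on one counting fact: the subtrees of `t` rooted at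
the external vertices of `s` partition `t ∖ s`, so `∑_{u ∈ extVerts s ∩ t} #t(u) = #t - #s`, and
Pascal's rule `C(n,k+1)(k+1) = C(n,k)(n-k)` absorbs that factor. Dividing by the case
`s = {∅}`, where the binomial factor `C(n,1) = n = #t(∅)` cancels the root, leaves
`C(#t,#s)⁻¹ ∏_{u ∈ s} #t(u)`.
-/

section Trees

variable {s t : Finset (List Bool)} {u v : List Bool}

lemma mem_extVerts : u ∈ extVerts s ↔ (∃ w ∈ s, ∃ b : Bool, w ++ [b] = u) ∧ u ∉ s := by
  simp only [extVerts, mem_sdiff, mem_union, mem_image]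
  constructor
  · rintro ⟨(⟨w, hw, rfl⟩ | ⟨w, hw, rfl⟩), hu⟩
    exacts [⟨⟨w, hw, true, rfl⟩, hu⟩, ⟨⟨w, hw, false, rfl⟩, hu⟩]
  · rintro ⟨⟨w, hw, b, rfl⟩, hu⟩
    cases b
    exacts [⟨Or.inr ⟨w, hw, rfl⟩, hu⟩, ⟨Or.inl ⟨w, hw, rfl⟩, hu⟩]

lemma isBinTree_singleton_nil : IsBinTree {[]} :=
  ⟨mem_singleton_self _, fun v hv u hu => by
    rw [mem_singleton] at hv ⊢
    exact List.prefix_nil.mp (hv ▸ hu)⟩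

lemma IsBinTree.insert_of_mem_extVerts (hs : IsBinTree s) (hu : u ∈ extVerts s) :
    IsBinTree (insert u s) := by
  obtain ⟨⟨w, hw, b, rfl⟩, -⟩ := mem_extVerts.1 hu
  refine ⟨mem_insert_of_mem hs.1, fun v hv p hp => ?_⟩
  rcases mem_insert.1 hv with rfl | hv
  · rcases List.prefix_concat_iff.1 hp with rfl | hp
    · exact mem_insert_self _ _
    · exact mem_insert_of_mem (hs.2 w hw p hp)
  · exact mem_insert_of_mem (hs.2 v hv p hp)

lemma IsBinTree.eq_of_prefix_of_mem_extVerts (hs : IsBinTree s) (hu : u ∈ extVerts s)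
    (hv : v ∈ extVerts s) (huv : u <+: v) : u = v := by
  obtain ⟨⟨w, hw, b, rfl⟩, -⟩ := mem_extVerts.1 hv
  rcases List.prefix_concat_iff.1 huv with rfl | hp
  · rfl
  · exact absurd (hs.2 w hw u hp) (mem_extVerts.1 hu).2

lemma exists_mem_extVerts_prefix (hnil : [] ∈ s) (hv : v ∉ s) :
    ∃ u ∈ extVerts s, u <+: v := by
  induction v using List.reverseRecOn with
  | nil => exact absurd hnil hv
  | append_singleton w b ih =>
    by_cases hw : w ∈ s
    · exact ⟨w ++ [b], mem_extVerts.2 ⟨⟨w, hw, b, rfl⟩, hv⟩, List.prefix_refl _⟩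
    · obtain ⟨u, hu, hp⟩ := ih hw
      exact ⟨u, hu, hp.trans (List.prefix_append _ _)⟩

lemma sdiff_eq_biUnion_extVerts (hs : IsBinTree s) (ht : IsBinTree t) :
    t \ s = (extVerts s ∩ t).biUnion (fun u => t.filter (fun v => u <+: v)) := by
  ext v
  simp only [mem_sdiff, mem_biUnion, mem_inter, mem_filter]
  constructor
  · rintro ⟨hvt, hvs⟩
    obtain ⟨u, hu, hp⟩ := exists_mem_extVerts_prefix hs.1 hvs
    exact ⟨u, ⟨hu, ht.2 v hvt u hp⟩, hvt, hp⟩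
  · rintro ⟨u, ⟨hu, -⟩, hvt, hp⟩
    exact ⟨hvt, fun hvs => (mem_extVerts.1 hu).2 (hs.2 v hvs u hp)⟩

lemma card_sdiff_eq_sum_subtreeCard (hs : IsBinTree s) (ht : IsBinTree t) :
    #(t \ s) = ∑ u ∈ extVerts s ∩ t, subtreeCard t u := by
  rw [sdiff_eq_biUnion_extVerts hs ht, card_biUnion]
  · rfl
  intro u hu u' hu' hne
  simp only [disjoint_left, mem_filter]
  rintro v ⟨-, hp⟩ ⟨-, hp'⟩
  rcases List.prefix_or_prefix_of_prefix hp hp' with h | h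
  · exact hne (hs.eq_of_prefix_of_mem_extVerts (mem_inter.1 hu).1 (mem_inter.1 hu').1 h)
  · exact hne (hs.eq_of_prefix_of_mem_extVerts (mem_inter.1 hu').1 (mem_inter.1 hu).1 h).symm

lemma subtreeCard_pos (hv : v ∈ t) : 0 < subtreeCard t v :=
  card_pos.2 ⟨v, mem_filter.2 ⟨hv, List.prefix_refl _⟩⟩

lemma subtreeCard_nil : subtreeCard t [] = #t := by
  rw [subtreeCard, filter_true_of_mem fun v _ => List.nil_prefix]

end Trees

lemma inv_choose_succ_mul_sub_div {n k : ℕ} (hk : k < n) :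
    ((n.choose (k + 1) : ℝ))⁻¹ * ((n : ℝ) - k) / (k + 1) = ((n.choose k : ℝ))⁻¹ := by
  have pascal : ((n.choose (k + 1) : ℕ) : ℝ) * (k + 1) = (n.choose k : ℝ) * ((n : ℝ) - k) := by
    rw [← Nat.cast_sub hk.le]
    exact_mod_cast Nat.choose_succ_right_eq n k
  have h₁ : ((n.choose (k + 1) : ℕ) : ℝ) ≠ 0 := by exact_mod_cast (Nat.choose_pos hk).ne'
  have h₂ : ((n.choose k : ℕ) : ℝ) ≠ 0 := by exact_mod_cast (Nat.choose_pos hk.le).ne'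
  field_simp
  linarith

/-- The paper's `P^s(chain hits t)`, in closed form. -/
noncomputable def bstHitProb (s t : Finset (List Bool)) : ℝ :=
  ((#t).choose #s : ℝ)⁻¹ * ∏ v ∈ t \ s, (subtreeCard t v : ℝ)⁻¹

section HitProb

variable {s t : Finset (List Bool)} {u : List Bool}

lemma bstHitProb_insert (hut : u ∈ t) (hus : u ∉ s) :
    bstHitProb (insert u s) t
      = ((#t).choose (#s + 1) : ℝ)⁻¹ * subtreeCard t u * ∏ v ∈ t \ s, (subtreeCard t v : ℝ)⁻¹ := by
  have hu : (subtreeCard t u : ℝ) ≠ 0 := by exact_mod_cast (subtreeCard_pos hut).ne'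
  rw [bstHitProb, card_insert_of_notMem hus, sdiff_insert,
    ← mul_prod_erase (t \ s) _ (mem_sdiff.2 ⟨hut, hus⟩)]
  field_simp

lemma sum_bstHitProb_insert (hs : IsBinTree s) (ht : IsBinTree t) (hst : s ⊂ t) :
    ∑ u ∈ extVerts s ∩ t, 1 / (#s + 1 : ℝ) * bstHitProb (insert u s) t = bstHitProb s t := by
  set P := ∏ v ∈ t \ s, (subtreeCard t v : ℝ)⁻¹
  have hsum : ∑ u ∈ extVerts s ∩ t, (subtreeCard t u : ℝ) = #t - #s := by
    rw [← Nat.cast_sub (card_le_card hst.le), ← card_sdiff_of_subset hst.le,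
      card_sdiff_eq_sum_subtreeCard hs ht, Nat.cast_sum]
  calc ∑ u ∈ extVerts s ∩ t, 1 / (#s + 1 : ℝ) * bstHitProb (insert u s) t
      = ∑ u ∈ extVerts s ∩ t, ((#t).choose (#s + 1) : ℝ)⁻¹ * P / (#s + 1) * subtreeCard t u := by
        refine sum_congr rfl fun u hu => ?_
        obtain ⟨hue, hut⟩ := mem_inter.1 hu
        rw [bstHitProb_insert hut (mem_extVerts.1 hue).2]
        ring
    _ = ((#t).choose (#s + 1) : ℝ)⁻¹ * (#t - #s) / (#s + 1) * P := by
        rw [← mul_sum, hsum]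
        ring
    _ = bstHitProb s t := by
        rw [inv_choose_succ_mul_sub_div (card_lt_card hst), bstHitProb]

lemma bstHitProb_eq_mul_prod (hst : s ⊆ t) :
    bstHitProb s t
      = ((#t).choose #s : ℝ)⁻¹ * (∏ u ∈ s, (subtreeCard t u : ℝ))
          * ∏ v ∈ t, (subtreeCard t v : ℝ)⁻¹ := by
  have hs : ∏ u ∈ s, (subtreeCard t u : ℝ) ≠ 0 :=
    prod_ne_zero_iff.2 fun u hu => by exact_mod_cast (subtreeCard_pos (hst hu)).ne'
  rw [bstHitProb, ← prod_sdiff hst, prod_inv_distrib (s := s)]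
  field_simp

end HitProb

lemma hit_eq_bstHitProb (hit : Finset (List Bool) → Finset (List Bool) → ℝ)
    (hself : ∀ t, hit t t = 1)
    (hzero : ∀ s t, ¬ s ⊆ t → hit s t = 0)
    (hrec : ∀ s t : Finset (List Bool), IsBinTree s → s ≠ t →
      hit s t = ∑ u ∈ extVerts s, (1 / (s.card + 1 : ℝ)) * hit (insert u s) t)
    {s t : Finset (List Bool)} (hs : IsBinTree s) (ht : IsBinTree t) (hst : s ⊆ t) :
    hit s t = bstHitProb s t := by
  induction hn : #(t \ s) generalizing s with
  | zero =>
    obtain rfl : s = t := subset_antisymm hst (sdiff_eq_empty_iff_subset.1 (card_eq_zero.1 hn))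
    simp [hself, bstHitProb]
  | succ n ih =>
    have hne : s ≠ t := by rintro rfl; simp at hn
    have hrestrict : hit s t = ∑ u ∈ extVerts s ∩ t, 1 / (#s + 1 : ℝ) * hit (insert u s) t := by
      rw [hrec s t hs hne]
      refine (sum_subset inter_subset_left fun u hu hut => ?_).symm
      rw [hzero _ _ fun h => hut (mem_inter.2 ⟨hu, h (mem_insert_self _ _)⟩), mul_zero]
    rw [hrestrict, ← sum_bstHitProb_insert hs ht (ssubset_of_subset_of_ne hst hne)]
    refine sum_congr rfl fun u hu => ?_
    obtain ⟨hue, hut⟩ := mem_inter.1 hu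
    have hus := (mem_extVerts.1 hue).2
    rw [ih (hs.insert_of_mem_extVerts hue) (insert_subset hut hst)]
    rw [sdiff_insert, card_erase_of_mem (mem_sdiff.2 ⟨hut, hus⟩), hn, Nat.add_sub_cancel]

/-- **Martin kernel of the binary search tree chain** with reference state `{[]}`:
`K(s,t) = hit s t / hit {[]} t`, where `hit` is the hitting probability of the BST
chain (which moves from a tree `s` to `insert u s` for a uniformly chosen external
vertex `u`).  For rooted binary trees `s ⊆ t`,
`K(s,t) = C(#t, #s)⁻¹ · ∏_{u ∈ s} #t(u)`, and `K(s,t) = 0` if `s ⊄ t`. -/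
theorem bst_martin_kernel
    (hit : Finset (List Bool) → Finset (List Bool) → ℝ)
    (hself : ∀ t, hit t t = 1)
    (hzero : ∀ s t, ¬ s ⊆ t → hit s t = 0)
    (hrec : ∀ s t : Finset (List Bool), IsBinTree s → s ≠ t →
      hit s t = ∑ u ∈ extVerts s, (1 / (s.card + 1 : ℝ)) * hit (insert u s) t)
    (s t : Finset (List Bool)) (hs : IsBinTree s) (ht : IsBinTree t) :
    (s ⊆ t →
      hit s t / hit {([] : List Bool)} t
        = ((t.card.choose s.card : ℝ))⁻¹ * ∏ u ∈ s, (subtreeCard t u : ℝ))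
    ∧ (¬ s ⊆ t → hit s t / hit {([] : List Bool)} t = 0) := by
  refine ⟨fun hst => ?_, fun hst => by rw [hzero s t hst, zero_div]⟩
  have hroot : {([] : List Bool)} ⊆ t := singleton_subset_iff.2 ht.1
  have hprod : ∏ v ∈ t, (subtreeCard t v : ℝ)⁻¹ ≠ 0 :=
    prod_ne_zero_iff.2 fun v hv => inv_ne_zero (by exact_mod_cast (subtreeCard_pos hv).ne')
  have hcard : (#t : ℝ) ≠ 0 := by exact_mod_cast (card_pos.2 ⟨[], ht.1⟩).ne'
  rw [hit_eq_bstHitProb hit hself hzero hrec hs ht hst,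
    hit_eq_bstHitProb hit hself hzero hrec isBinTree_singleton_nil ht hroot,
    bstHitProb_eq_mul_prod hst, bstHitProb_eq_mul_prod hroot, card_singleton,
    Nat.choose_one_right, prod_singleton, subtreeCard_nil, inv_mul_cancel₀ hcard, one_mul,
    mul_div_cancel_right₀ _ hprod]
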